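/- arXiv:2007.13132 — 2 statements merged into one kernel-verified Lean document; each statement's English description precedes it below -/
import Mathlib

section
/- For an odd integer n ≥ 3, there is no Italian dominating function of C₂ □ C_n of weight at most n; that is, γ_I(C₂ □ C_n) ≥ n + 1. -/
/-- An Italian dominating function on a digraph given by adjacency relation `adj`:
`f : V → {0,1,2}` such that every vertex with value 0 has an in-neighbor with value 2
or two distinct in-neighbors with value 1. -/
def IsIDF {V : Type*} (adj : V → V → Prop) (f : V → ℕ) : Prop :=
  (∀ v, f v ≤ 2) ∧ ∀ v, f v = 0 →
    (∃ w, adj w v ∧ f w = 2) ∨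
    (∃ w₁ w₂, w₁ ≠ w₂ ∧ adj w₁ v ∧ adj w₂ v ∧ f w₁ = 1 ∧ f w₂ = 1)

/-- The Italian domination number: minimum weight of an Italian dominating function. -/
noncomputable def italianDomNum (V : Type*) [Fintype V] (adj : V → V → Prop) : ℕ :=
  sInf {w : ℕ | ∃ f : V → ℕ, IsIDF adj f ∧ ∑ v, f v = w}

/-- The directed cycle on `n` vertices: arc `i → i+1 (mod n)`. -/
def cycleAdj (n : ℕ) (i j : Fin n) : Prop := (j : ℕ) = ((i : ℕ) + 1) % n

/-- Cartesian product of digraphs. -/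
def cartAdj {α β : Type*} (A : α → α → Prop) (B : β → β → Prop) (x y : α × β) : Prop :=
  (x.1 = y.1 ∧ B x.2 y.2) ∨ (A x.1 y.1 ∧ x.2 = y.2)

/-- Strong product of digraphs. -/
def strongAdj {α β : Type*} (A : α → α → Prop) (B : β → β → Prop) (x y : α × β) : Prop :=
  (A x.1 y.1 ∧ B x.2 y.2) ∨ (x.1 = y.1 ∧ B x.2 y.2) ∨ (A x.1 y.1 ∧ x.2 = y.2)

/-- Maximum out-degree of a finite digraph. -/
noncomputable def maxOutDeg (V : Type*) [Fintype V] (adj : V → V → Prop) : ℕ :=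
  Finset.univ.sup fun v => Nat.card {w | adj v w}

/-- Maximum in-degree of a finite digraph. -/
noncomputable def maxInDeg (V : Type*) [Fintype V] (adj : V → V → Prop) : ℕ :=
  Finset.univ.sup fun v => Nat.card {w | adj w v}

/-!
Every in-neighbour of a vertex `v` of `C_m □ C_n` is `p v` or `q v`, where the permutations
`p`, `q` shift one coordinate back, so the Italian condition at `v` gives
`2 ≤ 2 f v + f (p v) + f (q v)`. Summing over `v` counts every value four times, so
`mn ≤ 2 ∑ f`. If equality held, each of these inequalities would be an equality; this forces
`f ≤ 1` and `f v + f (p v) = 1`, so `f` alternates along the cycle `{0} × C_n`, which is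
impossible when `n` is odd.
-/

lemma cycleAdj_iff {n : ℕ} [NeZero n] {i j : Fin n} : cycleAdj n i j ↔ i = j - 1 := by
  rw [cycleAdj, eq_sub_iff_add_eq, eq_comm, Fin.ext_iff, Fin.val_add, Fin.val_one',
    Nat.add_mod_mod]

lemma cartAdj_cycleAdj_iff {m n : ℕ} [NeZero m] [NeZero n] {w v : Fin m × Fin n} :
    cartAdj (cycleAdj m) (cycleAdj n) w v ↔ w = (v.1, v.2 - 1) ∨ w = (v.1 - 1, v.2) := by
  simp only [cartAdj, cycleAdj_iff, Prod.ext_iff]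

lemma isIDF_const_two {V : Type*} (adj : V → V → Prop) : IsIDF adj fun _ => 2 :=
  ⟨fun _ => le_rfl, fun _ h => absurd h two_ne_zero⟩

lemma le_italianDomNum {V : Type*} [Fintype V] {adj : V → V → Prop} {k : ℕ}
    (h : ∀ f, IsIDF adj f → k ≤ ∑ v, f v) : k ≤ italianDomNum V adj :=
  le_csInf ⟨_, _, isIDF_const_two adj, rfl⟩ fun _ ⟨f, hf, hw⟩ => hw ▸ h f hf

namespace IsIDF

variable {V : Type*} {adj : V → V → Prop} {f : V → ℕ}

lemma two_le_add_of_inNeighbors (hf : IsIDF adj f) {v u₁ u₂ : V}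
    (hin : ∀ w, adj w v → w = u₁ ∨ w = u₂) (hv : f v = 0) : 2 ≤ f u₁ + f u₂ := by
  rcases hf.2 v hv with ⟨w, hw, hw2⟩ | ⟨w₁, w₂, hne, hw₁, hw₂, h₁, h₂⟩
  · rcases hin w hw with rfl | rfl <;> omega
  · rcases hin w₁ hw₁ with rfl | rfl <;> rcases hin w₂ hw₂ with rfl | rfl <;> simp_all

lemma add_apply_eq_one_of_two_mul_sum_le [Fintype V] (hf : IsIDF adj f) (p q : V ≃ V)
    (hin : ∀ v w, adj w v → w = p v ∨ w = q v) (hW : 2 * ∑ v, f v ≤ Fintype.card V) (v : V) :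
    f v + f (p v) = 1 := by
  have hlocal : ∀ v, 2 ≤ 2 * f v + f (p v) + f (q v) := fun v => by
    by_cases hv : f v = 0
    · have := hf.two_le_add_of_inNeighbors (hin v) hv; omega
    · omega
  have htotal : ∑ v, (2 * f v + f (p v) + f (q v)) ≤ ∑ _v : V, 2 :=
    calc ∑ v, (2 * f v + f (p v) + f (q v)) = 4 * ∑ v, f v := by
          simp only [Finset.sum_add_distrib, ← Finset.mul_sum, Equiv.sum_comp]; ring
      _ ≤ 2 * Fintype.card V := by omega
      _ = ∑ _v : V, 2 := by simp [mul_comm]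
  have heq := (Finset.sum_eq_sum_iff_of_le fun v _ => hlocal v).1
    (le_antisymm (Finset.sum_le_sum fun v _ => hlocal v) htotal)
  have hv := heq v (Finset.mem_univ _)
  have hpv := heq (p v) (Finset.mem_univ _)
  have hqv := heq (q v) (Finset.mem_univ _)
  omega

end IsIDF

lemma Fin.not_forall_add_apply_sub_one_eq_one {n : ℕ} [NeZero n] (hodd : Odd n) (g : Fin n → ℕ) :
    ¬ ∀ j, g j + g (j - 1) = 1 := by
  intro h
  have hsum : ∑ j, (g j + g (j - 1)) = ∑ j, g j + ∑ j, g j := by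
    rw [Finset.sum_add_distrib,
      Fintype.sum_equiv (Equiv.subRight 1) (fun j => g (j - 1)) g fun _ => rfl]
  simp only [h, Finset.sum_const, Finset.card_univ, Fintype.card_fin, smul_eq_mul, mul_one] at hsum
  exact Nat.not_even_iff_odd.2 hodd ⟨_, hsum⟩

lemma IsIDF.cartAdj_cycleAdj_mul_lt_two_mul_sum {m n : ℕ} [NeZero m] (hodd : Odd n)
    {f : Fin m × Fin n → ℕ} (hf : IsIDF (cartAdj (cycleAdj m) (cycleAdj n)) f) :
    m * n < 2 * ∑ v, f v := by
  have : NeZero n := ⟨hodd.pos.ne'⟩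
  by_contra! hW
  refine Fin.not_forall_add_apply_sub_one_eq_one hodd (fun j => f (0, j)) fun j => ?_
  refine hf.add_apply_eq_one_of_two_mul_sum_le ((Equiv.refl _).prodCongr (Equiv.subRight 1))
    ((Equiv.subRight 1).prodCongr (Equiv.refl _)) (fun _ _ => cartAdj_cycleAdj_iff.1) ?_ (0, j)
  simpa using hW

theorem stmt8_general (n : ℕ) (hodd : Odd n) :
    (¬ ∃ f : Fin 2 × Fin n → ℕ,
        IsIDF (cartAdj (cycleAdj 2) (cycleAdj n)) f ∧ (∑ p, f p) ≤ n) ∧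
    n + 1 ≤ italianDomNum (Fin 2 × Fin n) (cartAdj (cycleAdj 2) (cycleAdj n)) := by
  have hlt : ∀ f, IsIDF (cartAdj (cycleAdj 2) (cycleAdj n)) f → n + 1 ≤ ∑ v, f v := fun f hf => by
    have := hf.cartAdj_cycleAdj_mul_lt_two_mul_sum hodd
    omega
  exact ⟨fun ⟨f, hf, hW⟩ => absurd (hlt f hf) (by omega), le_italianDomNum hlt⟩

theorem stmt8 (n : ℕ) (hn : 3 ≤ n) (hodd : Odd n) :
    (¬ ∃ f : Fin 2 × Fin n → ℕ,
        IsIDF (cartAdj (cycleAdj 2) (cycleAdj n)) f ∧ (∑ p, f p) ≤ n) ∧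
    n + 1 ≤ italianDomNum (Fin 2 × Fin n) (cartAdj (cycleAdj 2) (cycleAdj n)) :=
  stmt8_general n hodd
end

section
/- For odd integers m = 2r+1 and n = 2s+1 with r, s ≥ 1, the function f on V(C_m ⊗ C_n) defined by f((2i+1, 2j+1)) = 1 for 0 ≤ i ≤ r and 0 ≤ j ≤ s, f((2i, 2j)) = 1 for 1 ≤ i ≤ r and 1 ≤ j ≤ s, and f = 0 otherwise, is an Italian dominating function of C_m ⊗ C_n of weight (r+1)(s+1) + rs = ⌈mn/2⌉. -/
/-!
The vertex `(a, b)` of `C_m ⊗ C_n` has the three in-neighbours `(a-1, b)`, `(a, b-1)` and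
`(a-1, b-1)`. Stepping back along an odd cycle flips the parity of the index, except at `0`,
whose predecessor `m - 1` is again even. Hence for a vertex of value `0` (coordinates of
different parity, so not both `0`) at least two of these in-neighbours have coordinates of
equal parity and value `1`. The weight counts `(r+1)(s+1)` even–even and `rs` odd–odd cells.
-/

section StrongProduct

variable {α β : Type*} {A : α → α → Prop} {B : β → β → Prop}

lemma strongAdj_of_adj_of_adj {x y : α} {u v : β} (hA : A x y) (hB : B u v) :
    strongAdj A B (x, u) (y, v) :=
  .inl ⟨hA, hB⟩

lemma strongAdj_of_right (x : α) {u v : β} (hB : B u v) : strongAdj A B (x, u) (x, v) :=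
  .inr (.inl ⟨rfl, hB⟩)

lemma strongAdj_of_left {x y : α} (hA : A x y) (u : β) : strongAdj A B (x, u) (y, u) :=
  .inr (.inr ⟨hA, rfl⟩)

end StrongProduct

lemma cycleAdj_sub_one {k : ℕ} (i : Fin (k + 1)) : cycleAdj (k + 1) (i - 1) i := by
  unfold cycleAdj
  rw [Fin.coe_sub_one]
  split_ifs with hi
  · simp [hi]
  · have hi' := Fin.val_ne_zero_iff.mpr hi
    rw [Nat.sub_add_cancel (Nat.one_le_iff_ne_zero.mpr hi'), Nat.mod_eq_of_lt i.isLt]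

lemma Fin.val_sub_one_mod_two {r : ℕ} (i : Fin (2 * r + 1)) :
    ((i - 1 : Fin (2 * r + 1)) : ℕ) % 2 = if (i : ℕ) = 0 then 0 else ((i : ℕ) + 1) % 2 := by
  rcases eq_or_ne i 0 with rfl | hi
  · simp
  · have hi' := Fin.val_ne_zero_iff.mpr hi
    rw [Fin.coe_sub_one, if_neg hi, if_neg hi']
    omega

lemma Fin.sub_one_ne_self {k : ℕ} (i : Fin (k + 1)) (hk : k ≠ 0) : i - 1 ≠ i := by
  rw [Ne, sub_eq_self, Fin.ext_iff]
  simp [Nat.mod_eq_of_lt, hk]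

lemma Finset.sum_range_two_mul_add_one_mod_two {M : Type*} [AddCommMonoid M] (g : ℕ → M)
    (s : ℕ) : ∑ i ∈ range (2 * s + 1), g (i % 2) = (s + 1) • g 0 + s • g 1 := by
  induction s with
  | zero => simp
  | succ s ih =>
    rw [show 2 * (s + 1) + 1 = 2 * s + 1 + 1 + 1 by ring, sum_range_succ, sum_range_succ, ih,
      show (2 * s + 1) % 2 = 1 by omega, show (2 * s + 1 + 1) % 2 = 0 by omega]
    simp only [succ_nsmul]
    abel

lemma Fin.sum_univ_two_mul_add_one_mod_two {M : Type*} [AddCommMonoid M] (g : ℕ → M)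
    (s : ℕ) : ∑ i : Fin (2 * s + 1), g (i % 2) = (s + 1) • g 0 + s • g 1 :=
  (Fin.sum_univ_eq_sum_range (fun i => g (i % 2)) _).trans
    (Finset.sum_range_two_mul_add_one_mod_two g s)

/-- Vertex `i : Fin m` is the paper's vertex `i + 1`, so the paper's cells `(2i+1, 2j+1)` and
`(2i, 2j)` are exactly the cells whose coordinates here have equal parity. -/
def checkerboard (m n : ℕ) (p : Fin m × Fin n) : ℕ :=
  if (p.1 : ℕ) % 2 = (p.2 : ℕ) % 2 then 1 else 0

lemma checkerboard_eq_one_iff {m n : ℕ} (p : Fin m × Fin n) :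
    checkerboard m n p = 1 ↔ (p.1 : ℕ) % 2 = (p.2 : ℕ) % 2 := by
  simp [checkerboard]

theorem checkerboard_isIDF {r s : ℕ} (hr : 1 ≤ r) (hs : 1 ≤ s) :
    IsIDF (strongAdj (cycleAdj (2 * r + 1)) (cycleAdj (2 * s + 1)))
      (checkerboard (2 * r + 1) (2 * s + 1)) := by
  refine ⟨fun p => by unfold checkerboard; split <;> omega, ?_⟩
  rintro ⟨a, b⟩ hab
  have hpar : (a : ℕ) % 2 ≠ (b : ℕ) % 2 := by simpa [checkerboard] using hab
  right
  simp only [checkerboard_eq_one_iff]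
  rcases eq_or_ne (a : ℕ) 0 with ha | ha
  · refine ⟨(a - 1, b - 1), (a, b - 1),
      fun h => a.sub_one_ne_self (by omega) (Prod.ext_iff.mp h).1,
      strongAdj_of_adj_of_adj (cycleAdj_sub_one a) (cycleAdj_sub_one b),
      strongAdj_of_right a (cycleAdj_sub_one b), ?_, ?_⟩ <;>
    simp only [Fin.val_sub_one_mod_two] <;> split_ifs <;> omega
  rcases eq_or_ne (b : ℕ) 0 with hb | hb
  · refine ⟨(a - 1, b - 1), (a - 1, b),
      fun h => b.sub_one_ne_self (by omega) (Prod.ext_iff.mp h).2,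
      strongAdj_of_adj_of_adj (cycleAdj_sub_one a) (cycleAdj_sub_one b),
      strongAdj_of_left (cycleAdj_sub_one a) b, ?_, ?_⟩ <;>
    simp only [Fin.val_sub_one_mod_two] <;> split_ifs <;> omega
  · refine ⟨(a - 1, b), (a, b - 1),
      fun h => a.sub_one_ne_self (by omega) (Prod.ext_iff.mp h).1,
      strongAdj_of_left (cycleAdj_sub_one a) b,
      strongAdj_of_right a (cycleAdj_sub_one b), ?_, ?_⟩ <;>
    simp only [Fin.val_sub_one_mod_two] <;> split_ifs <;> omega

theorem sum_checkerboard (r s : ℕ) :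
    ∑ p, checkerboard (2 * r + 1) (2 * s + 1) p = (r + 1) * (s + 1) + r * s := by
  let δ (p q : ℕ) : ℕ := if p = q then 1 else 0
  calc ∑ p, checkerboard (2 * r + 1) (2 * s + 1) p
      = ∑ a : Fin (2 * r + 1), ∑ b : Fin (2 * s + 1), δ (a % 2) (b % 2) :=
        Fintype.sum_prod_type _
    _ = ∑ a : Fin (2 * r + 1), ((s + 1) • δ (a % 2) 0 + s • δ (a % 2) 1) := by
        congr! 1 with a
        exact Fin.sum_univ_two_mul_add_one_mod_two (δ (a % 2)) s
    _ = (r + 1) • ((s + 1) • δ 0 0 + s • δ 0 1)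
          + r • ((s + 1) • δ 1 0 + s • δ 1 1) :=
        Fin.sum_univ_two_mul_add_one_mod_two (fun p => (s + 1) • δ p 0 + s • δ p 1) r
    _ = (r + 1) * (s + 1) + r * s := by simp [δ]

theorem stmt16 (r s m n : ℕ) (hr : 1 ≤ r) (hs : 1 ≤ s)
    (hm : m = 2 * r + 1) (hn : n = 2 * s + 1) :
    IsIDF (strongAdj (cycleAdj m) (cycleAdj n))
      (fun p : Fin m × Fin n => if (p.1 : ℕ) % 2 = (p.2 : ℕ) % 2 then 1 else 0) ∧
    (∑ p : Fin m × Fin n, if (p.1 : ℕ) % 2 = (p.2 : ℕ) % 2 then 1 else 0)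
      = (r + 1) * (s + 1) + r * s ∧
    (r + 1) * (s + 1) + r * s = (m * n + 1) / 2 := by
  subst hm hn
  refine ⟨checkerboard_isIDF hr hs, sum_checkerboard r s, ?_⟩
  rw [show (2 * r + 1) * (2 * s + 1) + 1 = ((r + 1) * (s + 1) + r * s) * 2 by ring,
    Nat.mul_div_cancel _ two_pos]
end
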